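/- arXiv:1912.03667 — 4 statements merged into one kernel-verified Lean document; each statement's English description precedes it below -/
import Mathlib

section
/- Define F(u) = (sinh u − u)/(2 sinh²(u/2)) for u > 0. Then F is strictly increasing on (0, ∞). -/
/-!
Since `2 sinh² (u/2) = cosh u - 1`, the derivative of `F` has the sign of
`u sinh u - 2 (cosh u - 1) = 4 sinh (u/2) ((u/2) cosh (u/2) - sinh (u/2))`,
which is positive because `tanh x < x` for `x > 0`.
-/

noncomputable def F (u : ℝ) : ℝ := (Real.sinh u - u) / (2 * Real.sinh (u / 2) ^ 2)

namespace Real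

theorem cosh_sub_one_eq_two_mul_sinh_half_sq (x : ℝ) : cosh x - 1 = 2 * sinh (x / 2) ^ 2 := by
  have h := cosh_two_mul (x / 2)
  rw [mul_div_cancel₀ x two_ne_zero, cosh_sq] at h
  linarith

theorem sinh_lt_mul_cosh {x : ℝ} (hx : 0 < x) : sinh x < x * cosh x := by
  have hmono : StrictMonoOn (fun x => x * cosh x - sinh x) (Set.Ici 0) := by
    refine strictMonoOn_of_hasDerivWithinAt_pos (f' := fun x => x * sinh x) (convex_Ici 0)
      (by fun_prop) (fun x _ => ?_) (fun x hx => ?_)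
    · have := ((hasDerivAt_id x).mul (hasDerivAt_cosh x)).sub (hasDerivAt_sinh x)
      exact (this.congr_deriv (by simp)).hasDerivWithinAt
    · rw [interior_Ici, Set.mem_Ioi] at hx
      exact mul_pos hx (sinh_pos_iff.mpr hx)
  simpa using hmono Set.self_mem_Ici hx.le hx

theorem two_mul_cosh_sub_one_lt_mul_sinh {x : ℝ} (hx : 0 < x) :
    2 * (cosh x - 1) < x * sinh x := by
  have hhalf : sinh (x / 2) < x / 2 * cosh (x / 2) := sinh_lt_mul_cosh (half_pos hx)
  have hs : 0 < sinh (x / 2) := sinh_pos_iff.mpr (half_pos hx)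
  have hsinh : sinh x = 2 * sinh (x / 2) * cosh (x / 2) := by
    rw [← sinh_two_mul, mul_div_cancel₀ x two_ne_zero]
  rw [cosh_sub_one_eq_two_mul_sinh_half_sq, hsinh]
  linarith [mul_lt_mul_of_pos_left hhalf hs]

end Real

open Real

theorem F_eq_div_cosh_sub_one (u : ℝ) : F u = (sinh u - u) / (cosh u - 1) := by
  rw [F, cosh_sub_one_eq_two_mul_sinh_half_sq]

theorem hasDerivAt_F {u : ℝ} (hu : u ≠ 0) :
    HasDerivAt F ((u * sinh u - 2 * (cosh u - 1)) / (cosh u - 1) ^ 2) u := by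
  have hne : cosh u - 1 ≠ 0 := sub_ne_zero.mpr (one_lt_cosh.mpr hu).ne'
  have h := ((hasDerivAt_sinh u).fun_sub (hasDerivAt_id' u)).fun_div
    ((hasDerivAt_cosh u).sub_const 1) hne
  rw [funext F_eq_div_cosh_sub_one]
  refine h.congr_deriv (congrArg (· / _) ?_)
  linear_combination cosh_sq_sub_sinh_sq u

theorem F_strictMonoOn : StrictMonoOn F (Set.Ioi (0 : ℝ)) := by
  have hderiv (u : ℝ) (hu : u ∈ Set.Ioi 0) := hasDerivAt_F (Set.mem_Ioi.mp hu).ne'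
  refine strictMonoOn_of_hasDerivWithinAt_pos (convex_Ioi 0)
    (fun u hu => (hderiv u hu).continuousAt.continuousWithinAt)
    (fun u hu => (hderiv u (interior_subset hu)).hasDerivWithinAt) (fun u hu => ?_)
  rw [interior_Ioi, Set.mem_Ioi] at hu
  exact div_pos (sub_pos.mpr (two_mul_cosh_sub_one_lt_mul_sinh hu))
    (pow_pos (sub_pos.mpr (one_lt_cosh.mpr hu.ne')) 2)
end

section
/- The equation tanh(κπ) = (π/κ)·(κ²−1)(3−κ²)/(κ²+1) has no solution κ in the open interval (1, √3). -/
/-!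
For `κ > 1` we have `κπ > 3`, and `tanh x = 1 - 2 / (e^{2x} + 1) > 9/10` once `x ≥ 3`. On the other
side, `(κ² - 1)(3 - κ²) / (κ(κ² + 1)) ≤ 2/7` for every `κ > 0`, so the right-hand side is at most
`2π/7 < 9/10`.
-/

open Real

lemma Real.tanh_eq_one_sub_two_div (x : ℝ) : tanh x = 1 - 2 / (exp (2 * x) + 1) := by
  have hexp : exp (2 * x) = exp x * exp x := by rw [two_mul, exp_add]
  rw [tanh_eq_sinh_div_cosh, sinh_eq, cosh_eq, exp_neg, hexp]
  field_simp
  ring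

lemma Real.nine_div_ten_lt_tanh {x : ℝ} (hx : 3 ≤ x) : 9 / 10 < tanh x := by
  have hexp : 25 ≤ exp (2 * x) := by
    have := quadratic_le_exp_of_nonneg (x := 2 * x) (by linarith)
    nlinarith
  rw [tanh_eq_one_sub_two_div, lt_sub_comm, div_lt_iff₀ (by positivity)]
  linarith

lemma sq_sub_one_mul_three_sub_sq_div_le {κ : ℝ} (hκ : 0 < κ) :
    (κ ^ 2 - 1) * (3 - κ ^ 2) / (κ * (κ ^ 2 + 1)) ≤ 2 / 7 := by
  rw [div_le_iff₀ (by positivity)]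
  nlinarith [sq_nonneg (κ ^ 2 + κ - 3)]

theorem no_solution_tanh_eq :
    ¬ ∃ κ : ℝ, κ ∈ Set.Ioo 1 (Real.sqrt 3) ∧
      Real.tanh (κ * Real.pi) =
        (Real.pi / κ) * ((κ ^ 2 - 1) * (3 - κ ^ 2) / (κ ^ 2 + 1)) := by
  rintro ⟨κ, ⟨hκ, -⟩, heq⟩
  have hκ0 : 0 < κ := by linarith
  have hlhs : 9 / 10 < tanh (κ * π) := nine_div_ten_lt_tanh (by nlinarith [pi_gt_three])
  have hrhs : π / κ * ((κ ^ 2 - 1) * (3 - κ ^ 2) / (κ ^ 2 + 1)) ≤ π * (2 / 7) := by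
    calc π / κ * ((κ ^ 2 - 1) * (3 - κ ^ 2) / (κ ^ 2 + 1))
        = π * ((κ ^ 2 - 1) * (3 - κ ^ 2) / (κ * (κ ^ 2 + 1))) := by field_simp
      _ ≤ π * (2 / 7) :=
        mul_le_mul_of_nonneg_left (sq_sub_one_mul_three_sub_sq_div_le hκ0) pi_pos.le
  linarith [pi_lt_d2]
end

section
/- For every ℓ > 0 there is exactly one κ ∈ (√3, ∞) satisfying (κ²−3)²/(4(κ²−1)) = (cosh(κ(π−ℓ)) + 1)/(sinh(κℓ)·sinh(κπ)). -/
/-!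
The left side vanishes at `√3`, is strictly increasing and tends to `+∞`. Since
`cosh (a - b) = cosh a cosh b - sinh a sinh b`, the right side equals
`coth (κπ) coth (κℓ) + csch (κπ) csch (κℓ) - 1`, a positive non-increasing function of `κ`.
So the difference of the two sides is continuous, strictly increasing, negative at `√3` and
unbounded above: it has exactly one zero.
-/

open Real Set Filter

lemma AntitoneOn.mul_of_nonneg {α M₀ : Type*} [Mul M₀] [Zero M₀] [Preorder M₀] [Preorder α]
    [PosMulMono M₀] [MulPosMono M₀] {f g : α → M₀} {s : Set α}
    (hf : AntitoneOn f s) (hg : AntitoneOn g s) (hf₀ : ∀ x ∈ s, 0 ≤ f x)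
    (hg₀ : ∀ x ∈ s, 0 ≤ g x) : AntitoneOn (f * g) s :=
  fun _ ha _ hb h ↦ mul_le_mul (hf ha hb h) (hg ha hb h) (hg₀ _ hb) (hf₀ _ ha)

theorem existsUnique_mem_Ioi_eq_of_strictMonoOn_of_antitoneOn {X : Type*}
    [ConditionallyCompleteLinearOrder X] [TopologicalSpace X] [OrderTopology X]
    [DenselyOrdered X] {f g : X → ℝ} {a : X}
    (hf : StrictMonoOn f (Ici a)) (hg : AntitoneOn g (Ici a))
    (hfc : ContinuousOn f (Ici a)) (hgc : ContinuousOn g (Ici a))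
    (hfa : f a < g a) (hft : Tendsto f atTop atTop) :
    ∃! x, x ∈ Ioi a ∧ f x = g x := by
  have hmono : StrictMonoOn (f - g) (Ici a) := fun x hx y hy hxy ↦ by
    simp only [Pi.sub_apply]
    linarith [hf hx hy hxy, hg hx hy hxy.le]
  have htend : Tendsto (f - g) atTop atTop := by
    refine tendsto_atTop_mono' _ ?_ (tendsto_atTop_add_const_right _ (-g a) hft)
    filter_upwards [Ici_mem_atTop a] with x hx
    simp only [Pi.sub_apply]
    linarith [hg self_mem_Ici hx hx]
  obtain ⟨x, hx, hx0⟩ : (0 : ℝ) ∈ (f - g) '' Ici a :=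
    isPreconnected_Ici.intermediate_value_Ici self_mem_Ici
      (le_principal_iff.2 (Ici_mem_atTop a)) (hfc.sub hgc) htend
      (show f a - g a ≤ 0 by linarith)
  have hxa : a < x := lt_of_le_of_ne hx (by rintro rfl; simp at hx0; linarith)
  refine ⟨x, ⟨hxa, sub_eq_zero.1 hx0⟩, fun y ⟨hy, hfy⟩ ↦ hmono.injOn (mem_Ici.2 hy.le) hx ?_⟩
  simp only [Pi.sub_apply, hfy, sub_self]
  exact hx0.symm

lemma Real.coth_antitoneOn : AntitoneOn (fun x ↦ cosh x / sinh x) (Ioi 0) := by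
  intro x hx y hy hxy
  rw [div_le_div_iff₀ (sinh_pos_iff.2 hy) (sinh_pos_iff.2 hx)]
  have := sinh_nonneg_iff.2 (sub_nonneg.2 hxy)
  rw [sinh_sub] at this
  linarith

lemma Real.inv_sinh_antitoneOn : AntitoneOn (fun x ↦ (sinh x)⁻¹) (Ioi 0) :=
  fun _ hx _ _ hxy ↦ inv_anti₀ (sinh_pos_iff.2 hx) (sinh_le_sinh.2 hxy)

lemma Real.cosh_sub_add_one_div_sinh_mul_sinh {a b : ℝ} (ha : sinh a ≠ 0) (hb : sinh b ≠ 0) :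
    (cosh (a - b) + 1) / (sinh b * sinh a) =
      cosh a / sinh a * (cosh b / sinh b) + (sinh a)⁻¹ * (sinh b)⁻¹ - 1 := by
  rw [cosh_sub]
  field_simp
  ring

lemma antitoneOn_cosh_mul_sub_add_one_div_sinh_mul_sinh {p q : ℝ} (hp : 0 < p) (hq : 0 < q) :
    AntitoneOn (fun κ ↦ (cosh (κ * (p - q)) + 1) / (sinh (κ * q) * sinh (κ * p))) (Ioi 0) := by
  have hscale {φ : ℝ → ℝ} (hφ : AntitoneOn φ (Ioi 0)) {r : ℝ} (hr : 0 < r) :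
      AntitoneOn (fun κ ↦ φ (κ * r)) (Ioi 0) := fun x hx y hy hxy ↦
    hφ (mul_pos hx hr) (mul_pos hy hr) (mul_le_mul_of_nonneg_right hxy hr.le)
  have hcoth_nonneg {r : ℝ} (hr : 0 < r) : ∀ κ ∈ Ioi (0 : ℝ), 0 ≤ cosh (κ * r) / sinh (κ * r) :=
    fun κ hκ ↦ div_nonneg (cosh_pos _).le (sinh_pos_iff.2 (mul_pos hκ hr)).le
  have hcsch_nonneg {r : ℝ} (hr : 0 < r) : ∀ κ ∈ Ioi (0 : ℝ), 0 ≤ (sinh (κ * r))⁻¹ :=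
    fun κ hκ ↦ inv_nonneg.2 (sinh_pos_iff.2 (mul_pos hκ hr)).le
  have hcoth := (hscale coth_antitoneOn hp).mul_of_nonneg (hscale coth_antitoneOn hq)
    (hcoth_nonneg hp) (hcoth_nonneg hq)
  have hcsch := (hscale inv_sinh_antitoneOn hp).mul_of_nonneg (hscale inv_sinh_antitoneOn hq)
    (hcsch_nonneg hp) (hcsch_nonneg hq)
  intro x hx y hy hxy
  have hsinh {κ r : ℝ} (hκ : κ ∈ Ioi (0 : ℝ)) (hr : 0 < r) : sinh (κ * r) ≠ 0 :=
    (sinh_pos_iff.2 (mul_pos hκ hr)).ne'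
  simp only [mul_sub, cosh_sub_add_one_div_sinh_mul_sinh (hsinh hx hp) (hsinh hx hq),
    cosh_sub_add_one_div_sinh_mul_sinh (hsinh hy hp) (hsinh hy hq)]
  have h₁ := hcoth hx hy hxy
  have h₂ := hcsch hx hy hxy
  simp only [Pi.mul_apply] at h₁ h₂
  linarith

lemma strictMonoOn_sq_sub_three_sq_div : StrictMonoOn
    (fun κ : ℝ ↦ (κ ^ 2 - 3) ^ 2 / (4 * (κ ^ 2 - 1))) (Ici (√3)) := by
  intro x hx y _ hxy
  obtain ⟨hx0, hx3⟩ := sqrt_le_iff.1 (mem_Ici.1 hx)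
  have hxy2 : x ^ 2 < y ^ 2 := pow_lt_pow_left₀ hxy hx0 two_ne_zero
  rw [div_lt_div_iff₀ (by linarith) (by linarith)]
  nlinarith [mul_pos (sub_pos.2 hxy2) (sub_pos.2 hxy2)]

lemma tendsto_sq_sub_three_sq_div_atTop :
    Tendsto (fun κ : ℝ ↦ (κ ^ 2 - 3) ^ 2 / (4 * (κ ^ 2 - 1))) atTop atTop := by
  have hquad : Tendsto (fun κ : ℝ ↦ (κ ^ 2 - 5) / 4) atTop atTop :=
    (tendsto_atTop_add_const_right _ _ (tendsto_pow_atTop two_ne_zero)).atTop_div_const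
      (by norm_num)
  -- with `u = κ ^ 2 - 1` the function is `u / 4 - 1 + 1 / u`
  refine tendsto_atTop_mono' _ ?_ hquad
  filter_upwards [eventually_ge_atTop 2] with κ hκ
  rw [le_div_iff₀ (by nlinarith)]
  nlinarith

theorem unique_band_edge (ℓ : ℝ) (hℓ : 0 < ℓ) :
    ∃! κ : ℝ, κ ∈ Set.Ioi (Real.sqrt 3) ∧
      (κ ^ 2 - 3) ^ 2 / (4 * (κ ^ 2 - 1)) =
        (Real.cosh (κ * (Real.pi - ℓ)) + 1) /
          (Real.sinh (κ * ℓ) * Real.sinh (κ * Real.pi)) := by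
  have hpos : Ici (√3) ⊆ Ioi 0 := Ici_subset_Ioi.2 (by positivity)
  have hsinh : ∀ κ ∈ Ici (√3), 0 < sinh (κ * ℓ) * sinh (κ * π) := fun κ hκ ↦
    mul_pos (sinh_pos_iff.2 (mul_pos (hpos hκ) hℓ)) (sinh_pos_iff.2 (mul_pos (hpos hκ) pi_pos))
  refine existsUnique_mem_Ioi_eq_of_strictMonoOn_of_antitoneOn strictMonoOn_sq_sub_three_sq_div
    ((antitoneOn_cosh_mul_sub_add_one_div_sinh_mul_sinh pi_pos hℓ).mono hpos) ?_ ?_ ?_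
    tendsto_sq_sub_three_sq_div_atTop
  · refine ContinuousOn.div (by fun_prop) (by fun_prop) fun κ hκ ↦ ?_
    linarith [(sqrt_le_iff.1 (mem_Ici.1 hκ)).2]
  · exact ContinuousOn.div (by fun_prop) (by fun_prop) fun κ hκ ↦ (hsinh κ hκ).ne'
  · have hsqrt : √3 ^ 2 = 3 := sq_sqrt (by norm_num)
    rw [hsqrt, sub_self, zero_pow two_ne_zero, zero_div]
    exact div_pos (by positivity) (hsinh _ self_mem_Ici)
end

section
/- The equation cosh(κπ) = cos θ with κ > 0 and θ ∈ ℝ has no solution, and the equation cos(kπ) = cos θ has, for every θ ∈ ℝ, the solution set {k ≥ 0 : k = |θ/π + 2n| for some n ∈ ℤ}; consequently for each θ the set of energies k² = (θ/π + 2n)², n ∈ ℤ, together covers [0, ∞) as θ ranges over [−π, π). -/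
/-!
Since `cos θ ≤ 1 < cosh x` for `x ≠ 0`, there are no negative energies. On the positive side,
`cos x = cos y` exactly when `x = ±(y + 2nπ)`; for `x = kπ` with `k ≥ 0` this reads
`k = |y/π + 2n|`. Finally every `x ≥ 0` reduces modulo `2` into `[-1, 1)`, so taking `θ/π` to be
that representative gives `x² = (θ/π + 2n)²` with `θ ∈ [-π, π)`.
-/

open Real

theorem Real.cos_lt_cosh {x : ℝ} (hx : x ≠ 0) (y : ℝ) : cos y < cosh x :=
  (cos_le_one y).trans_lt (one_lt_cosh.mpr hx)

theorem Real.cos_eq_cos_iff_abs_eq {x y : ℝ} :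
    cos x = cos y ↔ ∃ n : ℤ, |x| = |y + 2 * n * π| := by
  rw [cos_eq_cos_iff]
  constructor <;> rintro ⟨n, h⟩ <;> refine ⟨-n, ?_⟩ <;> push_cast <;> rw [abs_eq_abs] at *
  · rcases h with h | h
    exacts [.inl (by linarith), .inr (by linarith)]
  · rcases h with h | h
    exacts [.inl (by linarith), .inr (by linarith)]

theorem Real.cos_mul_pi_eq_cos_iff {k : ℝ} (hk : 0 ≤ k) (θ : ℝ) :
    cos (k * π) = cos θ ↔ ∃ n : ℤ, k = |θ / π + 2 * n| := by
  have hπ : 0 < π := pi_pos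
  refine cos_eq_cos_iff_abs_eq.trans (exists_congr fun n => ?_)
  have : θ + 2 * n * π = (θ / π + 2 * n) * π := by field_simp
  rw [this, abs_mul, abs_mul, abs_of_nonneg hk, abs_of_pos hπ,
    mul_left_inj' hπ.ne']

theorem Real.exists_mem_Ico_neg_pi_eq_div_pi_add (x : ℝ) :
    ∃ θ ∈ Set.Ico (-π) π, ∃ n : ℤ, x = θ / π + 2 * n := by
  have hp : 0 < 2 * π := by positivity
  refine ⟨toIcoMod hp (-π) (x * π), by simpa [two_mul] using toIcoMod_mem_Ico hp (-π) (x * π),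
    toIcoDiv hp (-π) (x * π), ?_⟩
  have h := toIcoMod_add_toIcoDiv_zsmul hp (-π) (x * π)
  rw [zsmul_eq_mul] at h
  field_simp
  linarith

theorem tight_chain_spectrum :
    (¬ ∃ κ : ℝ, 0 < κ ∧ ∃ θ : ℝ, Real.cosh (κ * Real.pi) = Real.cos θ) ∧
    (∀ θ : ℝ, {k : ℝ | 0 ≤ k ∧ Real.cos (k * Real.pi) = Real.cos θ} =
      {k : ℝ | 0 ≤ k ∧ ∃ n : ℤ, k = |θ / Real.pi + 2 * n|}) ∧
    (⋃ θ ∈ Set.Ico (-Real.pi) Real.pi,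
        {E : ℝ | ∃ n : ℤ, E = (θ / Real.pi + 2 * n) ^ 2}) = Set.Ici 0 := by
  refine ⟨?_, fun θ => ?_, ?_⟩
  · rintro ⟨κ, hκ, θ, h⟩
    exact (cos_lt_cosh (mul_pos hκ pi_pos).ne' θ).ne' h
  · ext k
    simp only [Set.mem_ofPred_eq]
    exact and_congr_right fun hk => cos_mul_pi_eq_cos_iff hk θ
  · ext E
    simp only [Set.mem_iUnion, Set.mem_ofPred_eq, Set.mem_Ici, exists_prop]
    constructor
    · rintro ⟨θ, -, n, rfl⟩
      positivity
    · intro hE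
      obtain ⟨θ, hθ, n, hx⟩ := exists_mem_Ico_neg_pi_eq_div_pi_add √E
      exact ⟨θ, hθ, n, by rw [← hx, sq_sqrt hE]⟩
end
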